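/- arXiv:1608.06112 — 5 statements merged into one kernel-verified Lean document; each statement's English description precedes it below -/
import Mathlib

section
/- Let P(X,Y) = ∑_{a=0}^{n} (-1)^a * C(r₁+n-1, n-a) * C(r₂+n-1, a) * X^a * Y^{n-a} be the Rankin–Cohen coefficient polynomial. Then there exists a homogeneous polynomial Q(X,Y) of degree n-1 with integer coefficients such that P(X,Y) = (-1)^n * C(r₁+r₂+2n-2, n) * X^n + (X+Y) * Q(X,Y). -/
open MvPolynomial in
/-- For `n ≥ 1` there is a homogeneous `Q` of degree `n-1` with integer
coefficients such that
`P(X,Y) = (-1)^n C(r₁+r₂+2n-2, n) X^n + (X+Y) Q(X,Y)`,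
where `P` is the Rankin–Cohen coefficient polynomial. -/
theorem rankin_cohen_poly_decomposition (r₁ r₂ n : ℕ) (hn : 1 ≤ n) :
    ∃ Q : MvPolynomial (Fin 2) ℤ, Q.IsHomogeneous (n - 1) ∧
      (∑ a ∈ Finset.range (n + 1),
          C ((-1 : ℤ) ^ a * ((r₁ + n - 1).choose (n - a) : ℤ) *
              ((r₂ + n - 1).choose a : ℤ)) * X 0 ^ a * X 1 ^ (n - a)) =
        C ((-1 : ℤ) ^ n * ((r₁ + r₂ + 2 * n - 2).choose n : ℤ)) * X 0 ^ n +
          (X 0 + X 1) * Q := by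
  classical
  set p : ℕ → ℤ := fun a =>
    (-1 : ℤ) ^ a * ((r₁ + n - 1).choose (n - a) : ℤ) * ((r₂ + n - 1).choose a : ℤ) with hp
  set q : ℕ → ℤ := fun a => ∑ j ∈ Finset.range (a + 1), (-1 : ℤ) ^ (a - j) * p j with hqdef
  have hq0 : q 0 = p 0 := by simp [hqdef]
  have hqs : ∀ t, q (t + 1) = p (t + 1) - q t := by
    intro t
    rw [hqdef]
    simp only
    rw [Finset.sum_range_succ]
    have h1 : ∑ j ∈ Finset.range (t + 1), (-1 : ℤ) ^ (t + 1 - j) * p j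
        = -∑ j ∈ Finset.range (t + 1), (-1 : ℤ) ^ (t - j) * p j := by
      rw [← Finset.sum_neg_distrib]
      refine Finset.sum_congr rfl fun j hj => ?_
      have hj' : j ≤ t := by simpa [Nat.lt_succ_iff] using hj
      have h2 : t + 1 - j = (t - j) + 1 := by omega
      rw [h2, pow_succ]; ring
    rw [h1]
    simp only [Nat.sub_self, pow_zero, one_mul]
    ring
  have key : ∀ t, t ≤ n →
      (∑ a ∈ Finset.range (t + 1), C (p a) * X 0 ^ a * X 1 ^ (n - a)
          : MvPolynomial (Fin 2) ℤ) =
        (X 0 + X 1) * (∑ a ∈ Finset.range t, C (q a) * X 0 ^ a * X 1 ^ (n - 1 - a))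
          + C (q t) * X 0 ^ t * X 1 ^ (n - t) := by
    intro t
    induction t with
    | zero => intro _; simp [hq0]
    | succ t ih =>
      intro ht
      rw [Finset.sum_range_succ, ih (by omega), Finset.sum_range_succ, hqs t, map_sub]
      have hu1 : n - t = (n - 1 - t) + 1 := by omega
      have hu2 : n - (t + 1) = n - 1 - t := by omega
      rw [hu1, hu2]
      ring
  have hqn : q n = (-1 : ℤ) ^ n * ((r₁ + r₂ + 2 * n - 2).choose n : ℤ) := by
    have hv := Nat.add_choose_eq (r₂ + n - 1) (r₁ + n - 1) n
    rw [Finset.Nat.sum_antidiagonal_eq_sum_range_succ_mk] at hv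
    have hmk : (r₂ + n - 1) + (r₁ + n - 1) = r₁ + r₂ + 2 * n - 2 := by omega
    rw [hmk] at hv
    rw [hqdef]
    simp only [hp]
    have : ∀ j ∈ Finset.range (n + 1),
        (-1 : ℤ) ^ (n - j) * ((-1 : ℤ) ^ j * ((r₁ + n - 1).choose (n - j) : ℤ)
          * ((r₂ + n - 1).choose j : ℤ))
        = (-1 : ℤ) ^ n * (((r₂ + n - 1).choose j : ℤ) * ((r₁ + n - 1).choose (n - j) : ℤ)) := by
      intro j hj
      have hj' : j ≤ n := by simpa [Nat.lt_succ_iff] using hj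
      have : (-1 : ℤ) ^ (n - j) * (-1 : ℤ) ^ j = (-1 : ℤ) ^ n := by
        rw [← pow_add]
        congr 1
        omega
      calc (-1 : ℤ) ^ (n - j) * ((-1 : ℤ) ^ j * ((r₁ + n - 1).choose (n - j) : ℤ)
            * ((r₂ + n - 1).choose j : ℤ))
          = ((-1 : ℤ) ^ (n - j) * (-1 : ℤ) ^ j)
            * (((r₂ + n - 1).choose j : ℤ) * ((r₁ + n - 1).choose (n - j) : ℤ)) := by ring
        _ = _ := by rw [this]
    rw [Finset.sum_congr rfl this, ← Finset.mul_sum]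
    congr 1
    rw [hv]
    push_cast
    rfl
  refine ⟨∑ a ∈ Finset.range n, C (q a) * X 0 ^ a * X 1 ^ (n - 1 - a), ?_, ?_⟩
  · apply MvPolynomial.IsHomogeneous.sum
    intro a ha
    have ha' : a < n := Finset.mem_range.mp ha
    have h : ((C (q a) * X 0 ^ a * X 1 ^ (n - 1 - a)) :
        MvPolynomial (Fin 2) ℤ).IsHomogeneous (0 + 1 * a + 1 * (n - 1 - a)) :=
      (((isHomogeneous_C _ _).mul ((isHomogeneous_X _ _).pow a)).mul
        ((isHomogeneous_X _ _).pow (n - 1 - a)))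
    convert h using 1
    omega
  · have := key n le_rfl
    rw [Nat.sub_self, pow_zero, mul_one] at this
    rw [hqn] at this
    simp only [hp] at this
    refine this.trans ?_
    ring
end

section
/- Let α₁, β₁, α₂, β₂ be elements of a commutative ring. Define P_{p₁}(T) = (1 - α₁T)(1 - β₁T), P_{p₂}(T) = (1 - α₂T)(1 - β₂T), and P(T) = (1 - α₁α₂T)(1 - α₁β₂T)(1 - β₁α₂T)(1 - β₁β₂T). Define a(T₁,T₂) = α₁β₁α₂β₂(α₂+β₂)T₁²T₂³ - α₁β₁α₂β₂T₁²T₂² - α₂β₂(α₁+β₁)T₁T₂² + 1 and b(T₁,T₂) = α₁²β₁²α₂β₂T₁⁴T₂² - α₁β₁(α₂+β₂)T₁²T₂ - α₁β₁T₁² + (α₁+β₁)T₁. Then a(T₁,T₂)·P_{p₁}(T₁) + b(T₁,T₂)·P_{p₂}(T₂) = P(T₁T₂) as polynomials in T₁, T₂. -/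
open MvPolynomial

/-- `P_{𝔭}(T) = (1 - αT)(1 - βT)` as a polynomial in `R[T₁,T₂]` evaluated at `T`. -/
noncomputable def Ppoly {R : Type*} [CommRing R] (α β : R)
    (T : MvPolynomial (Fin 2) R) : MvPolynomial (Fin 2) R :=
  (1 - C α * T) * (1 - C β * T)

/-- The quartic `P(T) = (1 - α₁α₂T)(1 - α₁β₂T)(1 - β₁α₂T)(1 - β₁β₂T)`. -/
noncomputable def Pquartic {R : Type*} [CommRing R] (α₁ β₁ α₂ β₂ : R)
    (T : MvPolynomial (Fin 2) R) : MvPolynomial (Fin 2) R :=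
  (1 - C (α₁ * α₂) * T) * (1 - C (α₁ * β₂) * T) *
    (1 - C (β₁ * α₂) * T) * (1 - C (β₁ * β₂) * T)

/-- `a(T₁,T₂) = α₁β₁α₂β₂(α₂+β₂)T₁²T₂³ - α₁β₁α₂β₂T₁²T₂² - α₂β₂(α₁+β₁)T₁T₂² + 1`. -/
noncomputable def aPoly {R : Type*} [CommRing R] (α₁ β₁ α₂ β₂ : R) :
    MvPolynomial (Fin 2) R :=
  C (α₁ * β₁ * α₂ * β₂ * (α₂ + β₂)) * X 0 ^ 2 * X 1 ^ 3
    - C (α₁ * β₁ * α₂ * β₂) * X 0 ^ 2 * X 1 ^ 2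
    - C (α₂ * β₂ * (α₁ + β₁)) * X 0 * X 1 ^ 2 + 1

/-- `b(S,T) = α²β²γδ S⁴T² - αβ(γ+δ)S²T - αβS² + (α+β)S`, with `(α,β)` the parameters at
the first prime, `(γ,δ)` at the second, `S` the first variable and `T` the second. -/
noncomputable def bPoly {R : Type*} [CommRing R] (α β γ δ : R)
    (S T : MvPolynomial (Fin 2) R) : MvPolynomial (Fin 2) R :=
  C (α ^ 2 * β ^ 2 * γ * δ) * S ^ 4 * T ^ 2 - C (α * β * (γ + δ)) * S ^ 2 * T
    - C (α * β) * S ^ 2 + C (α + β) * S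

/-- `a(T₁,T₂)·P_{𝔭₁}(T₁) + b(T₁,T₂)·P_{𝔭₂}(T₂) = P(T₁T₂)` in `R[T₁,T₂]`. -/
theorem star_product_identity {R : Type*} [CommRing R] (α₁ β₁ α₂ β₂ : R) :
    aPoly α₁ β₁ α₂ β₂ * Ppoly α₁ β₁ (X 0) + bPoly α₁ β₁ α₂ β₂ (X 0) (X 1) * Ppoly α₂ β₂ (X 1)
      = Pquartic α₁ β₁ α₂ β₂ (X 0 * X 1) := by
  simp only [aPoly, bPoly, Ppoly, Pquartic, map_mul, map_add, map_pow]
  ring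
end

section
/- With notation as in the previous statement (α₁,β₁,α₂,β₂ in a commutative ring, P_{p₁}, P_{p₂}, P as defined there, and b(T₁,T₂) as defined there, with b'(T₁,T₂) obtained from b by interchanging the indices 1 and 2, i.e. b'(T₁,T₂) = α₂²β₂²α₁β₁T₂⁴T₁² - α₂β₂(α₁+β₁)T₂²T₁ - α₂β₂T₂² + (α₂+β₂)T₂), we have the polynomial identity P(T₁T₂) = (1 - α₁β₁α₂β₂T₁²T₂²)·P_{p₁}(T₁)·P_{p₂}(T₂) + b(T₁,T₂)·P_{p₂}(T₂) + b'(T₁,T₂)·P_{p₁}(T₁). -/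
open MvPolynomial

/-- `P(T₁T₂) = (1 - α₁β₁α₂β₂T₁²T₂²)·P_{𝔭₁}(T₁)·P_{𝔭₂}(T₂) + b(T₁,T₂)·P_{𝔭₂}(T₂) + b'(T₁,T₂)·P_{𝔭₁}(T₁)`
in `R[T₁,T₂]`. -/
theorem star_product_identity' {R : Type*} [CommRing R] (α₁ β₁ α₂ β₂ : R) :
    Pquartic α₁ β₁ α₂ β₂ (X 0 * X 1)
      = (1 - C (α₁ * β₁ * α₂ * β₂) * X 0 ^ 2 * X 1 ^ 2) * Ppoly α₁ β₁ (X 0) * Ppoly α₂ β₂ (X 1)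
        + bPoly α₁ β₁ α₂ β₂ (X 0) (X 1) * Ppoly α₂ β₂ (X 1)
        + bPoly α₂ β₂ α₁ β₁ (X 1) (X 0) * Ppoly α₁ β₁ (X 0) := by
  simp only [Ppoly, Pquartic, bPoly, map_mul, map_add, map_pow]
  ring
end

section
/- Let F be a real quadratic field with ring of integers O_F, different ideal 𝔡, and let p be a rational prime that splits in F as pO_F = 𝔭₁𝔭₂. Let λ ∈ 𝔡⁻¹ be totally positive with valuation v_{𝔭₁}(λ) ≥ x and v_{𝔭₂}(λ) = y, where x > y ≥ 0 are integers. Then the p-adic valuation of the trace Tr_{F/ℚ}(λ) equals y. -/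
/-!
Let `μ = Tr(λ) - λ` be the conjugate of `λ`, so that `λ * μ = N(λ)` and `λ + μ = Tr(λ)` are
rational. As `p` is unramified, both `𝔭ᵢ`-adic valuations restrict to the `p`-adic valuation on `ℚ`,
so they agree on `λ * μ` and on `λ + μ`. Since `v_{𝔭₁}(λ) > v_{𝔭₂}(λ)`, agreement on the product
gives `v_{𝔭₁}(μ) < v_{𝔭₂}(μ)`; if also `v_{𝔭₂}(μ) ≤ v_{𝔭₂}(λ)`, the ultrametric inequality would
give `v_{𝔭₁}(λ + μ) = v_{𝔭₁}(μ) < v_{𝔭₂}(λ + μ)`. Hence `v_{𝔭₂}(μ) > v_{𝔭₂}(λ)` and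
`v_p(Tr λ) = v_{𝔭₂}(λ + μ) = v_{𝔭₂}(λ) = y`. (Valuations are written additively here; Mathlib's
are multiplicative, which reverses all these inequalities.)
-/

open IsDedekindDomain NumberField WithZero

theorem Valuation.map_add_eq_of_lt_of_map_mul_eq_of_map_add_eq {K Γ₀ : Type*} [Field K]
    [LinearOrderedCommGroupWithZero Γ₀] {v₁ v₂ : Valuation K Γ₀} {a b : K}
    (hlt : v₁ a < v₂ a) (hmul : v₁ (a * b) = v₂ (a * b)) (hadd : v₁ (a + b) = v₂ (a + b)) :
    v₂ (a + b) = v₂ a := by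
  have hb : b ≠ 0 := by
    rintro rfl
    simp only [add_zero] at hadd
    exact hlt.ne hadd
  have hb_lt : v₂ b < v₁ b := by
    by_contra! hle
    have hb₂ : v₂ b ≠ 0 := (map_ne_zero v₂).mpr hb
    rw [map_mul, map_mul] at hmul
    refine hmul.not_lt ?_
    calc v₁ a * v₁ b ≤ v₁ a * v₂ b := by gcongr
      _ < v₂ a * v₂ b := mul_lt_mul_of_pos_right hlt (zero_lt_iff.mpr hb₂)
  rcases lt_or_ge (v₂ b) (v₂ a) with hba | hab
  · exact v₂.map_add_eq_of_lt_left hba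
  · exfalso
    have hv₁ : v₁ (a + b) = v₁ b :=
      v₁.map_add_eq_of_lt_right (hlt.trans_le (hab.trans_lt hb_lt).le)
    have : v₂ (a + b) < v₂ (a + b) :=
      calc v₂ (a + b) ≤ max (v₂ a) (v₂ b) := v₂.map_add a b
        _ = v₂ b := max_eq_right hab
        _ < v₁ b := hb_lt
        _ = v₂ (a + b) := hv₁.symm.trans hadd
    exact this.false

theorem Rat.valuation_ext_of_prime {Γ₀ : Type*} [LinearOrderedCommGroupWithZero Γ₀]
    {v w : Valuation ℚ Γ₀} (h : ∀ ℓ : ℕ, ℓ.Prime → v ℓ = w ℓ) : v = w := by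
  have hnat : ∀ n : ℕ, v n = w n := by
    intro n
    induction n using Nat.recOnMul with
    | zero => simp
    | one => simp
    | prime ℓ hℓ => exact h ℓ hℓ
    | mul a b ha hb => simp only [Nat.cast_mul, map_mul, ha, hb]
  have hint : ∀ n : ℤ, v n = w n := by
    intro n
    obtain ⟨m, rfl | rfl⟩ := Int.eq_nat_or_neg n <;>
      simp only [Int.cast_natCast, Int.cast_neg, Valuation.map_neg, hnat]
  refine Valuation.ext fun q => ?_
  rw [← q.num_div_den, map_div₀, map_div₀, hint, hnat]

theorem Algebra.sq_sub_trace_mul_add_norm {K L : Type*} [Field K] [CommRing L] [Algebra K L]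
    (h : Module.finrank K L = 2) (s : L) :
    s ^ 2 - algebraMap K L (trace K L s) * s + algebraMap K L (norm K s) = 0 := by
  have : Module.Finite K L := Module.finite_of_finrank_eq_succ h
  let b := Module.finBasisOfFinrankEq K L h
  apply Algebra.leftMulMatrix_injective b
  have := (Algebra.leftMulMatrix b s).aeval_self_charpoly
  rw [Matrix.charpoly_fin_two] at this
  simpa [Algebra.trace_eq_matrix_trace b, Algebra.norm_eq_matrix_det b, Algebra.smul_def] using this

theorem Rat.padicValRat_eq_of_padicValuation_eq_exp {p : ℕ} [Fact p.Prime] {q : ℚ} {n : ℤ}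
    (h : Rat.padicValuation p q = exp (-n)) : padicValRat p q = n := by
  have hq : q ≠ 0 := by
    rintro rfl
    exact exp_ne_zero (h.symm.trans (map_zero _))
  simpa [Rat.padicValuation, hq] using h

theorem Ideal.natCast_notMem_of_natCast_mem {R : Type*} [CommRing R] {P : Ideal R} [P.IsPrime]
    {p ℓ : ℕ} (hp : p.Prime) (hℓ : ℓ.Prime) (hℓp : ℓ ≠ p) (hpP : (p : R) ∈ P) : (ℓ : R) ∉ P := by
  intro hℓP
  obtain ⟨a, b, hab⟩ : IsCoprime (p : R) (ℓ : R) :=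
    ((Nat.coprime_primes hp hℓ).mpr hℓp.symm).cast
  refine Ideal.IsPrime.ne_top ‹_› ((Ideal.eq_top_iff_one _).mpr ?_)
  rw [← hab]
  exact add_mem (Ideal.mul_mem_left _ _ hpP) (Ideal.mul_mem_left _ _ hℓP)

namespace IsDedekindDomain.HeightOneSpectrum

variable {R : Type*} [CommRing R] [IsDedekindDomain R]

theorem intValuation_eq_exp_neg_one_of_span_eq_mul {v w : HeightOneSpectrum R} (hne : v ≠ w)
    {r : R} (h : Ideal.span {r} = v.asIdeal * w.asIdeal) : w.intValuation r = exp (-1) := by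
  have hr : r ≠ 0 := by
    rintro rfl
    rw [Ideal.span_singleton_zero, eq_comm, Ideal.mul_eq_bot] at h
    exact h.elim v.ne_bot w.ne_bot
  have hwv : ¬ w.asIdeal ∣ v.asIdeal := fun hdvd =>
    hne (asIdeal_injective (v.isMaximal.eq_of_le w.isPrime.ne_top (Ideal.le_of_dvd hdvd)))
  have hmult : emultiplicity w.asIdeal (v.asIdeal * w.asIdeal) = 1 := by
    rw [emultiplicity_mul w.prime, emultiplicity_eq_zero.mpr hwv,
      (FiniteMultiplicity.of_prime_left w.prime w.ne_bot).emultiplicity_self, zero_add]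
  rw [intValuation_eq_exp_neg_multiplicity w hr, h,
    multiplicity_eq_of_emultiplicity_eq_some (by exact_mod_cast hmult), Nat.cast_one]

variable {K : Type*} [Field K] [CharZero K] [Algebra R K] [IsFractionRing R K]

theorem valuation_comap_eq_padicValuation {p : ℕ} [hp : Fact p.Prime] (w : HeightOneSpectrum R)
    (hw : w.intValuation (p : R) = exp (-1)) :
    (w.valuation K).comap (algebraMap ℚ K) = Rat.padicValuation p := by
  have hpw : (p : R) ∈ w.asIdeal := by
    rw [← intValuation_lt_one_iff_mem, hw, ← exp_zero, exp_lt_exp]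
    norm_num
  refine Rat.valuation_ext_of_prime fun ℓ hℓ => ?_
  rw [Valuation.comap_apply, map_natCast, ← map_natCast (algebraMap R K), valuation_of_algebraMap]
  by_cases hℓp : ℓ = p
  · subst hℓp
    rw [hw, Rat.padicValuation_self]
  · rw [intValuation_eq_one_iff.mpr (Ideal.natCast_notMem_of_natCast_mem hp.out hℓ hℓp hpw)]
    have hpℓ : ¬ p ∣ ℓ := (Nat.prime_dvd_prime_iff_eq hp.out hℓ).not.mpr (Ne.symm hℓp)
    simp [Rat.padicValuation, hℓ.ne_zero, hpℓ]

end IsDedekindDomain.HeightOneSpectrum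

theorem padic_val_trace_of_depleted_general (F : Type*) [Field F] [NumberField F]
    (hdeg : Module.finrank ℚ F = 2)
    (p : ℕ) (hp : p.Prime)
    (𝔭₁ 𝔭₂ : HeightOneSpectrum (𝓞 F)) (hne : 𝔭₁ ≠ 𝔭₂)
    (hsplit : Ideal.span {(p : 𝓞 F)} = 𝔭₁.asIdeal * 𝔭₂.asIdeal)
    (x y : ℕ) (hxy : y < x) (l : F)
    (hv1 : 𝔭₁.valuation F l ≤
      ((Multiplicative.ofAdd (-(x : ℤ)) : Multiplicative ℤ) : WithZero (Multiplicative ℤ)))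
    (hv2 : 𝔭₂.valuation F l =
      ((Multiplicative.ofAdd (-(y : ℤ)) : Multiplicative ℤ) : WithZero (Multiplicative ℤ))) :
    padicValRat p (Algebra.trace ℚ F l) = y := by
  have : Fact p.Prime := ⟨hp⟩
  have h₁ : (𝔭₁.valuation F).comap (algebraMap ℚ F) = Rat.padicValuation p :=
    𝔭₁.valuation_comap_eq_padicValuation <|
      HeightOneSpectrum.intValuation_eq_exp_neg_one_of_span_eq_mul hne.symm
        (hsplit.trans (mul_comm _ _))
  have h₂ : (𝔭₂.valuation F).comap (algebraMap ℚ F) = Rat.padicValuation p :=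
    𝔭₂.valuation_comap_eq_padicValuation <|
      HeightOneSpectrum.intValuation_eq_exp_neg_one_of_span_eq_mul hne hsplit
  have hagree (q : ℚ) : 𝔭₁.valuation F (algebraMap ℚ F q) = 𝔭₂.valuation F (algebraMap ℚ F q) :=
    congrArg (· q) (h₁.trans h₂.symm)
  set t := Algebra.trace ℚ F l
  have hnorm : l * (algebraMap ℚ F t - l) = algebraMap ℚ F (Algebra.norm ℚ l) := by
    linear_combination -Algebra.sq_sub_trace_mul_add_norm hdeg l
  have hlt : 𝔭₁.valuation F l < 𝔭₂.valuation F l :=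
    hv1.trans_lt (hv2 ▸ exp_lt_exp.mpr (by omega))
  have key := Valuation.map_add_eq_of_lt_of_map_mul_eq_of_map_add_eq hlt
    (by rw [hnorm, hagree]) (by rw [add_sub_cancel, hagree])
  rw [add_sub_cancel, hv2] at key
  exact Rat.padicValRat_eq_of_padicValuation_eq_exp (congrArg (· t) h₂ ▸ key)

/-- Let `F` be a real quadratic field, `p` a rational prime split in `F` as
`pO_F = 𝔭₁𝔭₂`, and `λ` a totally positive element of the inverse different `𝔡⁻¹` with
`v_{𝔭₁}(λ) ≥ x` and `v_{𝔭₂}(λ) = y`, where `x > y ≥ 0`.  Then `v_p(Tr_{F/ℚ}(λ)) = y`.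
(The valuation normalisation of Mathlib sends a uniformiser at `𝔭` to `ofAdd (-1)`, so
`v_𝔭(λ) ≥ x` reads `valuation λ ≤ ofAdd (-x)`.) -/
theorem padic_val_trace_of_depleted (F : Type*) [Field F] [NumberField F]
    (hdeg : Module.finrank ℚ F = 2)
    (hreal : ∀ φ : F →+* ℂ, ComplexEmbedding.IsReal φ)
    (p : ℕ) (hp : p.Prime)
    (𝔭₁ 𝔭₂ : HeightOneSpectrum (𝓞 F)) (hne : 𝔭₁ ≠ 𝔭₂)
    (hsplit : Ideal.span {(p : 𝓞 F)} = 𝔭₁.asIdeal * 𝔭₂.asIdeal)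
    (x y : ℕ) (hxy : y < x) (l : F)
    (hl : l ∈ ((differentIdeal ℤ (𝓞 F) :
        FractionalIdeal (nonZeroDivisors (𝓞 F)) F))⁻¹)
    (hpos : ∀ ψ : F →+* ℝ, 0 < ψ l)
    (hv1 : 𝔭₁.valuation F l ≤
      ((Multiplicative.ofAdd (-(x : ℤ)) : Multiplicative ℤ) : WithZero (Multiplicative ℤ)))
    (hv2 : 𝔭₂.valuation F l =
      ((Multiplicative.ofAdd (-(y : ℤ)) : Multiplicative ℤ) : WithZero (Multiplicative ℤ))) :
    padicValRat p (Algebra.trace ℚ F l) = y :=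
  padic_val_trace_of_depleted_general F hdeg p hp 𝔭₁ 𝔭₂ hne hsplit x y hxy l hv1 hv2
end

section
/- Let A be an n×n matrix over ℤ/p^{N+c}ℤ and suppose the Smith normal form of A over ℤ/p^{N+c}ℤ has exactly one elementary divisor equal to 0 and all other elementary divisors dividing p^c. Then the image of ker(A) ⊆ (ℤ/p^{N+c})^n under reduction modulo p^N is a free ℤ/p^Nℤ-module of rank 1. -/
lemma key_cast_zero (p N c e : ℕ) (hp : p.Prime) (he : e ≤ c)
    (x : ZMod (p ^ (N + c))) (hx : (p : ZMod (p ^ (N + c))) ^ e * x = 0) :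
    ZMod.castHom (pow_dvd_pow p (Nat.le_add_right N c)) (ZMod (p ^ N)) x = 0 := by
  haveI : NeZero (p ^ (N + c)) := ⟨pow_ne_zero _ hp.ne_zero⟩
  haveI : NeZero (p ^ N) := ⟨pow_ne_zero _ hp.ne_zero⟩
  have h1 : ((p ^ e * x.val : ℕ) : ZMod (p ^ (N + c))) = 0 := by
    push_cast
    rw [ZMod.natCast_val, ZMod.cast_id]
    exact hx
  rw [ZMod.natCast_eq_zero_iff] at h1
  have h2 : p ^ e * p ^ (N + c - e) ∣ p ^ e * x.val := by
    rw [← pow_add]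
    have : e + (N + c - e) = N + c := by omega
    rwa [this]
  have h3 : p ^ (N + c - e) ∣ x.val :=
    (Nat.mul_dvd_mul_iff_left (pow_pos hp.pos e)).mp h2
  have h4 : p ^ N ∣ x.val :=
    dvd_trans (pow_dvd_pow p (by omega)) h3
  rw [ZMod.castHom_apply, ZMod.cast_eq_val, ZMod.natCast_eq_zero_iff]
  exact h4

open Matrix in
/-- Let `A` be an `n × n` matrix over `ℤ/p^{N+c}` whose Smith normal form
(`A = U D V` with `U, V` invertible and `D` diagonal) has exactly one elementary divisor
equal to `0`, all the others being powers `p^e` with `e ≤ c`.  Then the image of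
`ker A ⊆ (ℤ/p^{N+c})^n` under reduction modulo `p^N` is a free `ℤ/p^N`-module of rank
one, i.e. it is `{t • w : t ∈ ℤ/p^N}` for some `w` with `t ↦ t • w` injective. -/
theorem kernel_image_free_rank_one (p : ℕ) (hp : p.Prime) (N c n : ℕ) (hN : 1 ≤ N)
    (A : Matrix (Fin n) (Fin n) (ZMod (p ^ (N + c))))
    (hSNF : ∃ (U V : Matrix (Fin n) (Fin n) (ZMod (p ^ (N + c))))
        (d : Fin n → ZMod (p ^ (N + c))),
      IsUnit U.det ∧ IsUnit V.det ∧ A = U * Matrix.diagonal d * V ∧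
        ∃ i₀ : Fin n, d i₀ = 0 ∧
          ∀ i, i ≠ i₀ → ∃ e ≤ c, d i = (p : ZMod (p ^ (N + c))) ^ e) :
    ∃ w : Fin n → ZMod (p ^ N),
      ((fun v : Fin n → ZMod (p ^ (N + c)) => fun i =>
            ZMod.castHom (pow_dvd_pow p (Nat.le_add_right N c)) (ZMod (p ^ N)) (v i)) ''
          {v | A.mulVec v = 0})
        = Set.range (fun t : ZMod (p ^ N) => t • w) ∧
      Function.Injective (fun t : ZMod (p ^ N) => t • w) := by
  classical
  obtain ⟨U, V, d, hU, hV, hA, i₀, hd0, hd⟩ := hSNF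
  set f := ZMod.castHom (pow_dvd_pow p (Nat.le_add_right N c)) (ZMod (p ^ N)) with hf
  set B := V⁻¹ with hB
  have hVB : V * B = 1 := Matrix.mul_nonsing_inv V hV
  have hBV : B * V = 1 := Matrix.nonsing_inv_mul V hV
  set w : Fin n → ZMod (p ^ N) := fun i => f (B i i₀) with hw
  -- t • w is (B.map f) *ᵥ single
  have hsmul : ∀ t : ZMod (p ^ N), t • w = (B.map f) *ᵥ Pi.single i₀ t := by
    intro t
    funext i
    rw [Matrix.mulVec_single]
    simp [hw, Matrix.map_apply, mul_comm]
  -- cancel B by V on reduced vectors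
  have hcancel : ∀ x : Fin n → ZMod (p ^ N),
      (V.map f) *ᵥ ((B.map f) *ᵥ x) = x := by
    intro x
    rw [Matrix.mulVec_mulVec, ← Matrix.map_mul, hVB,
      Matrix.map_one f (map_zero f) (map_one f), Matrix.one_mulVec]
  refine ⟨w, ?_, ?_⟩
  · ext x
    constructor
    · rintro ⟨v, hv, rfl⟩
      simp only [Set.mem_setOf_eq] at hv
      set u := V *ᵥ v with hu
      have hDu : (Matrix.diagonal d) *ᵥ u = 0 := by
        have h1 : U⁻¹ *ᵥ (A *ᵥ v) = 0 := by rw [hv, Matrix.mulVec_zero]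
        rw [hA, Matrix.mulVec_mulVec, mul_assoc, ← mul_assoc U⁻¹,
          Matrix.nonsing_inv_mul U hU, one_mul, ← Matrix.mulVec_mulVec] at h1
        exact h1
      have hui : ∀ i, i ≠ i₀ → f (u i) = 0 := by
        intro i hi
        obtain ⟨e, he, hde⟩ := hd i hi
        have : d i * u i = 0 := by
          have := congrFun hDu i
          rwa [Matrix.mulVec_diagonal] at this
        rw [hde] at this
        exact key_cast_zero p N c e hp he (u i) this
      have hfu : (fun i => f (u i)) = Pi.single i₀ (f (u i₀)) := by
        funext i
        by_cases h : i = i₀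
        · subst h; simp
        · rw [hui i h, Pi.single_eq_of_ne h]
      have hvu : v = B *ᵥ u := by
        rw [hu, Matrix.mulVec_mulVec, hBV, Matrix.one_mulVec]
      refine ⟨f (u i₀), ?_⟩
      show f (u i₀) • w = fun i => f (v i)
      rw [hsmul]
      funext i
      rw [← hfu]
      conv_rhs => rw [hvu]
      exact (RingHom.map_mulVec f B u i).symm
    · rintro ⟨t, rfl⟩
      obtain ⟨t', ht'⟩ := ZMod.ringHom_surjective f t
      refine ⟨B *ᵥ Pi.single i₀ t', ?_, ?_⟩
      · show A *ᵥ (B *ᵥ Pi.single i₀ t') = 0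
        rw [hA, Matrix.mulVec_mulVec, mul_assoc (U * Matrix.diagonal d), hVB, mul_one,
          ← Matrix.mulVec_mulVec, Matrix.diagonal_mulVec_single, hd0, zero_mul,
          Pi.single_zero, Matrix.mulVec_zero]
      · show (fun i => f ((B *ᵥ Pi.single i₀ t') i)) = t • w
        rw [hsmul]
        funext i
        have h2 : f ((B *ᵥ Pi.single i₀ t') i) = ((B.map f) *ᵥ (f ∘ Pi.single i₀ t')) i :=
          RingHom.map_mulVec f B _ i
        have h3 : (f ∘ Pi.single i₀ t') = Pi.single i₀ t := by
          funext j
          by_cases h : j = i₀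
          · subst h; simp [ht']
          · simp [Pi.single_eq_of_ne h]
        rw [h2, h3]
  · intro t s hts
    simp only at hts
    rw [hsmul t, hsmul s] at hts
    have h := congrArg (fun y => (V.map ⇑f) *ᵥ y) hts
    rw [hcancel, hcancel] at h
    have := congrFun h i₀
    simpa using this
end
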